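/- Guessing leakage satisfies the post-processing inequality: if X − U − U' form a Markov chain (X and U' are conditionally independent given U) over finite alphabets, then GL(X → U') ≤ GL(X → U). -/

import Mathlib

/-
A guessing strategy is a ranking `r` of the alphabet, and its expected cost
`∑ i, (r i + 1) p i` is linear in `p`. Hence `HG`, a minimum of linear functions, is concave:
`∑ u, w u * HG (p u) ≤ HG (∑ u, w u • p u)` for nonnegative weights `w`. Along the Markov chain
`X − U − U'`, each `p_{X|U'=u'}` is the `p_{U|U'=u'}`-mixture of the `p_{X|U=u}`, so concavity
gives `H_G(X|U) ≤ H_G(X|U')`, which is the claim.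
-/

noncomputable def HG {n : ℕ} (p : Fin n → ℝ) : ℝ :=
  Finset.univ.inf' Finset.univ_nonempty
    (fun r : Equiv.Perm (Fin n) => ∑ i, (((r i : ℕ) : ℝ) + 1) * p i)

section GuessingEntropy

variable {n : ℕ}

theorem HG_le_cost (p : Fin n → ℝ) (r : Equiv.Perm (Fin n)) :
    HG p ≤ ∑ i, (((r i : ℕ) : ℝ) + 1) * p i :=
  Finset.inf'_le _ (Finset.mem_univ r)

theorem le_HG_iff {p : Fin n → ℝ} {c : ℝ} :
    c ≤ HG p ↔ ∀ r : Equiv.Perm (Fin n), c ≤ ∑ i, (((r i : ℕ) : ℝ) + 1) * p i := by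
  simp [HG, Finset.le_inf'_iff]

theorem sum_mul_HG_le_HG_sum {ι : Type*} (s : Finset ι) (w : ι → ℝ) (hw : ∀ u ∈ s, 0 ≤ w u)
    (p : ι → Fin n → ℝ) :
    ∑ u ∈ s, w u * HG (p u) ≤ HG (fun i => ∑ u ∈ s, w u * p u i) := by
  refine le_HG_iff.mpr fun r => ?_
  calc ∑ u ∈ s, w u * HG (p u)
      ≤ ∑ u ∈ s, w u * ∑ i, (((r i : ℕ) : ℝ) + 1) * p u i :=
        Finset.sum_le_sum fun u hu => mul_le_mul_of_nonneg_left (HG_le_cost _ r) (hw u hu)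
    _ = ∑ i, (((r i : ℕ) : ℝ) + 1) * ∑ u ∈ s, w u * p u i := by
        simp only [Finset.mul_sum]
        rw [Finset.sum_comm]
        refine Finset.sum_congr rfl fun u _ => Finset.sum_congr rfl fun i _ => ?_
        ring

end GuessingEntropy

theorem guessing_leakage_post_processing_general {n : ℕ} {U U' : Type*}
    [Fintype U] [Fintype U']
    (pU' : U' → ℝ) (hU'0 : ∀ u', 0 ≤ pU' u')
    (pUgU' : U' → U → ℝ) (hUg0 : ∀ u' u, 0 ≤ pUgU' u' u)
    (pXgU : U → Fin n → ℝ)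
    (pU : U → ℝ) (hpU : ∀ u, pU u = ∑ u', pU' u' * pUgU' u' u)
    (pXgU' : U' → Fin n → ℝ)
    (hXgU' : ∀ u' i, pXgU' u' i = ∑ u, pUgU' u' u * pXgU u i)
    (pX : Fin n → ℝ) :
    HG pX - ∑ u', pU' u' * HG (pXgU' u') ≤
      HG pX - ∑ u, pU u * HG (pXgU u) := by
  have concavity (u' : U') : ∑ u, pUgU' u' u * HG (pXgU u) ≤ HG (pXgU' u') := by
    rw [show pXgU' u' = _ from funext (hXgU' u')]
    exact sum_mul_HG_le_HG_sum _ _ (fun u _ => hUg0 u' u) pXgU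
  have conditional_HG_le : ∑ u, pU u * HG (pXgU u) ≤ ∑ u', pU' u' * HG (pXgU' u') :=
    calc ∑ u, pU u * HG (pXgU u)
        = ∑ u', pU' u' * ∑ u, pUgU' u' u * HG (pXgU u) := by
          simp only [hpU, Finset.sum_mul, Finset.mul_sum, mul_assoc]
          exact Finset.sum_comm
      _ ≤ ∑ u', pU' u' * HG (pXgU' u') :=
          Finset.sum_le_sum fun u' _ => mul_le_mul_of_nonneg_left (concavity u') (hU'0 u')
  exact sub_le_sub_left conditional_HG_le _

/-- Post-processing inequality for guessing leakage. For a Markov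
chain `X − U − U'` (encoded via `p_{U|U'}` and `p_{X|U}`, with
`p_{X|U'=u'} = ∑_u p(u|u') p_{X|U=u}`), `GL(X → U') ≤ GL(X → U)`. -/
theorem guessing_leakage_post_processing {n : ℕ} {U U' : Type*}
    [Fintype U] [Fintype U']
    (pU' : U' → ℝ) (hU'0 : ∀ u', 0 ≤ pU' u') (hU'1 : ∑ u', pU' u' = 1)
    (pUgU' : U' → U → ℝ) (hUg0 : ∀ u' u, 0 ≤ pUgU' u' u)
    (hUg1 : ∀ u', ∑ u, pUgU' u' u = 1)
    (pXgU : U → Fin n → ℝ)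
    (hX0 : ∀ u i, 0 ≤ pXgU u i) (hX1 : ∀ u, ∑ i, pXgU u i = 1)
    (pU : U → ℝ) (hpU : ∀ u, pU u = ∑ u', pU' u' * pUgU' u' u)
    (pXgU' : U' → Fin n → ℝ)
    (hXgU' : ∀ u' i, pXgU' u' i = ∑ u, pUgU' u' u * pXgU u i)
    (pX : Fin n → ℝ) (hpX : ∀ i, pX i = ∑ u, pU u * pXgU u i) :
    HG pX - ∑ u', pU' u' * HG (pXgU' u') ≤
      HG pX - ∑ u, pU u * HG (pXgU u) :=
  guessing_leakage_post_processing_general pU' hU'0 pUgU' hUg0 pXgU pU hpU pXgU' hXgU' pX
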